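/- arXiv:0904.2795 — 2 statements merged into one kernel-verified Lean document; each statement's English description precedes it below -/
import Mathlib

section
/- For any Y ∈ M_{m,n}(ℝ): Y is very well approximable (VWA) if and only if the trajectory g_ℛ Λ_Y has linear growth, where ℛ is the central ray {(t/m,…,t/m, t/n,…,t/n) : t > 0} in 𝒜. -/
/-
Dani correspondence along the central ray. For `t = s • (1/m, …, 1/m, 1/n, …, 1/n)` the vector
`g_t u_Y (-p, q)` is `(e^{s/m} (Yq - p), e^{-s/n} q)`, so `g_t Λ_Y` has a nonzero vector shorter
than `e^{-γ s}` iff some `q ≠ 0` has `‖Yq - p‖ < e^{-(1/m + γ) s}` and `‖q‖ < e^{(1/n - γ) s}`.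
Writing `‖q‖ = e^L`, such a pair is an approximation with exponent `(1/m + γ)/(1/n - γ) > n/m`;
conversely, for `γ` small an approximation with exponent `κ > n/m` shows up at time
`s = κ L / (1/m + γ)`. Infinitely many approximations give arbitrarily large times since only
finitely many integer vectors have bounded norm. Arbitrarily large times give infinitely many
approximations: a single `q` is approximated with arbitrary precision only if `Yq ∈ ℤ^m`, and
then all multiples of `q` are approximations.
-/

open MeasureTheory Metric Set

noncomputable section

namespace Paper

instance matrixMeasurableSpace {m n : Type*} : MeasurableSpace (Matrix m n ℝ) :=
  (MeasurableSpace.pi : MeasurableSpace (m → n → ℝ))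

/-- The support of a measure on a metric space: points all of whose balls have
positive measure. -/
def msupport {X : Type*} [PseudoMetricSpace X] [MeasurableSpace X] (ν : Measure X) : Set X :=
  {x | ∀ r : ℝ, 0 < r → 0 < ν (ball x r)}

/-- `‖f‖_{ν,B}`, the supremum of `|f|` over `B ∩ supp ν`. -/
def supOn {X : Type*} [PseudoMetricSpace X] [MeasurableSpace X] (ν : Measure X) (B : Set X)
    (f : X → ℝ) : ℝ :=
  sSup ((fun x => |f x|) '' (B ∩ msupport ν))

/-- `f` is `(C,α)`-good on `U` with respect to `ν`. -/
def CAlphaGoodOn {X : Type*} [PseudoMetricSpace X] [MeasurableSpace X] (C α : ℝ) (f : X → ℝ)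
    (ν : Measure X) (U : Set X) : Prop :=
  ∀ x ∈ msupport ν, ∀ r : ℝ, 0 < r → ball x r ⊆ U → ∀ ε : ℝ, 0 < ε →
    ν {y ∈ ball x r | |f y| < ε} ≤
      ENNReal.ofReal (C * (ε / supOn ν (ball x r) f) ^ α) * ν (ball x r)

/-- The pair `(f, ν)` is good (relative to the open set `U`): for `ν`-a.e. `x ∈ U`
there are a neighborhood `V` of `x` and `C, α > 0` such that every affine combination
of `1, f₁, …, f_N` is `(C,α)`-good on `V` with respect to `ν`. -/
def GoodPairOn {X : Type*} [PseudoMetricSpace X] [MeasurableSpace X] {ι : Type*} [Fintype ι]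
    (f : X → ι → ℝ) (ν : Measure X) (U : Set X) : Prop :=
  ∀ᵐ x ∂ν, x ∈ U → ∃ V, IsOpen V ∧ x ∈ V ∧ ∃ C : ℝ, 0 < C ∧ ∃ α : ℝ, 0 < α ∧
    ∀ (a : ℝ) (b : ι → ℝ), CAlphaGoodOn C α (fun y => a + ∑ i, b i * f y i) ν V

/-- The pair `(f, ν)` is nonplanar (relative to the open set `U`): on every ball
`B ⊆ U` of positive measure, the restrictions of `1, f₁, …, f_N` to `B ∩ supp ν`
are linearly independent over `ℝ`. -/
def NonplanarPairOn {X : Type*} [PseudoMetricSpace X] [MeasurableSpace X] {ι : Type*} [Fintype ι]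
    (f : X → ι → ℝ) (ν : Measure X) (U : Set X) : Prop :=
  ∀ (x : X) (r : ℝ), 0 < r → ball x r ⊆ U → 0 < ν (ball x r) →
    ∀ (a : ℝ) (b : ι → ℝ), ¬(a = 0 ∧ b = 0) →
      ∃ y ∈ ball x r ∩ msupport ν, a + ∑ i, b i * f y i ≠ 0

/-- `ν` is `D`-Federer on `U`. -/
def IsFedererOn {X : Type*} [PseudoMetricSpace X] [MeasurableSpace X] (ν : Measure X) (D : ℝ)
    (U : Set X) : Prop :=
  ∀ x ∈ msupport ν, ∀ r : ℝ, 0 < r → ball x r ⊆ U →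
    ν (ball x r) < ENNReal.ofReal D * ν (ball x (r / 3))

/-- `ν` is Federer: `ν`-a.e. point has a neighborhood on which `ν` is `D`-Federer
for some `D > 0`. -/
def IsFederer {X : Type*} [PseudoMetricSpace X] [MeasurableSpace X] (ν : Measure X) : Prop :=
  ∀ᵐ x ∂ν, ∃ U, IsOpen U ∧ x ∈ U ∧ ∃ D : ℝ, 0 < D ∧ IsFedererOn ν D U

/-- Coordinatewise cast of an integer vector to a real vector. -/
def intCast {ι : Type*} (q : ι → ℤ) : ι → ℝ := fun i => (q i : ℝ)

/-- `Π(x) = ∏ᵢ |xᵢ|`. -/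
def mprod {ι : Type*} [Fintype ι] (x : ι → ℝ) : ℝ := ∏ i, |x i|

/-- `Π₊(x) = ∏ᵢ max (|xᵢ|) 1`. -/
def mprodPlus {ι : Type*} [Fintype ι] (x : ι → ℝ) : ℝ := ∏ i, max |x i| 1

/-- `Y` is very well multiplicatively approximable. -/
def IsVWMA {m n : ℕ} (Y : Matrix (Fin m) (Fin n) ℝ) : Prop :=
  ∃ δ : ℝ, 0 < δ ∧
    {q : Fin n → ℤ | ∃ p : Fin m → ℤ,
      mprod (Y.mulVec (intCast q) - intCast p) < mprodPlus (intCast q) ^ (-(1 + δ))}.Infinite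

/-- `Y` is very well approximable (`‖·‖` is the max norm). -/
def IsVWA {m n : ℕ} (Y : Matrix (Fin m) (Fin n) ℝ) : Prop :=
  ∃ δ : ℝ, 0 < δ ∧
    {q : Fin n → ℤ | ∃ p : Fin m → ℤ,
      ‖Y.mulVec (intCast q) - intCast p‖ < ‖intCast q‖ ^ (-(n / m : ℝ) - δ)}.Infinite

/-- A measure on `M_{m,n}(ℝ)` is strongly extremal if a.e. matrix is not VWMA. -/
def StronglyExtremal {m n : ℕ} (μ : Measure (Matrix (Fin m) (Fin n) ℝ)) : Prop :=
  ∀ᵐ Y ∂μ, ¬ IsVWMA Y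

/-- A measure on `M_{m,n}(ℝ)` is extremal if a.e. matrix is not VWA. -/
def Extremal {m n : ℕ} (μ : Measure (Matrix (Fin m) (Fin n) ℝ)) : Prop :=
  ∀ᵐ Y ∂μ, ¬ IsVWA Y

/-- The index set of the minors map: pairs of subsets `I ⊆ {1,…,m}`, `J ⊆ {1,…,n}`
with `|I| = |J| > 0`.  It has `C(m+n, m) - 1` elements. -/
abbrev MinorIdx (m n : ℕ) :=
  {p : Finset (Fin m) × Finset (Fin n) // p.1.card = p.2.card ∧ 0 < p.1.card}

/-- The minor `y_{I,J}` of `Y` on rows `I` and columns `J`. -/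
def minor {m n : ℕ} (Y : Matrix (Fin m) (Fin n) ℝ) (I : Finset (Fin m)) (J : Finset (Fin n))
    (h : I.card = J.card) : ℝ :=
  Matrix.det (Matrix.of fun a b : Fin I.card =>
    Y ((I.orderIsoOfFin rfl a : Fin m)) ((J.orderIsoOfFin h.symm b : Fin n)))

/-- The minors map `𝐝 : M_{m,n}(ℝ) → ℝ^N`, sending `Y` to the vector of all its minors. -/
def minorsMap {m n : ℕ} (Y : Matrix (Fin m) (Fin n) ℝ) : MinorIdx m n → ℝ :=
  fun p => minor Y p.1.1 p.1.2 p.2.1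

/-- `f` is `ℓ`-nondegenerate at `x`: the partial derivatives of `f` (taken inside `U`)
at `x` of orders `1, …, ℓ` span the target space. -/
def NondegenerateAtOrder {d : ℕ} {ι : Type*} [Fintype ι] (f : (Fin d → ℝ) → (ι → ℝ))
    (U : Set (Fin d → ℝ)) (ℓ : ℕ) (x : Fin d → ℝ) : Prop :=
  Submodule.span ℝ {y : ι → ℝ | ∃ j : ℕ, 1 ≤ j ∧ j ≤ ℓ ∧ ∃ e : Fin j → Fin d,
    y = iteratedFDerivWithin ℝ j f U x (fun a => Pi.single (e a) 1)} = ⊤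

/-- `f` is nondegenerate: for Lebesgue-a.e. `x ∈ U`, `f` is `ℓ`-nondegenerate at `x`
for some `ℓ`. -/
def IsNondegenerate {d : ℕ} {ι : Type*} [Fintype ι] (f : (Fin d → ℝ) → (ι → ℝ))
    (U : Set (Fin d → ℝ)) : Prop :=
  ∀ᵐ x ∂(volume.restrict U), ∃ ℓ : ℕ, NondegenerateAtOrder f U ℓ x

/-- The set `𝒜` of admissible parameters. -/
def calA (m n : ℕ) : Set (Fin (m + n) → ℝ) :=
  {t | (∀ i, 0 < t i) ∧
    ∑ i : Fin m, t (Fin.castAdd n i) = ∑ j : Fin n, t (Fin.natAdd m j)}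

/-- `⌞t⌟ = ∑_{i=1}^m tᵢ`. -/
def height (m n : ℕ) (t : Fin (m + n) → ℝ) : ℝ := ∑ i : Fin m, t (Fin.castAdd n i)

/-- The diagonal matrix `g_t = diag(e^{t₁},…,e^{t_m}, e^{−t_{m+1}},…,e^{−t_{m+n}})`. -/
def gMat (m n : ℕ) (t : Fin (m + n) → ℝ) : Matrix (Fin (m + n)) (Fin (m + n)) ℝ :=
  Matrix.diagonal fun i => if (i : ℕ) < m then Real.exp (t i) else Real.exp (-t i)

/-- The unipotent matrix `u_Y = [[I_m, Y], [0, I_n]]`. -/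
def uMat {m n : ℕ} (Y : Matrix (Fin m) (Fin n) ℝ) : Matrix (Fin (m + n)) (Fin (m + n)) ℝ :=
  Matrix.reindex finSumFinEquiv finSumFinEquiv (Matrix.fromBlocks 1 Y 0 1)

/-- The lattice `g ℤ^k` in `ℝ^k`. -/
def latticeOf {k : ℕ} (g : Matrix (Fin k) (Fin k) ℝ) : Set (Fin k → ℝ) :=
  {v | ∃ q : Fin k → ℤ, v = g.mulVec (intCast q)}

/-- The Euclidean norm on `ℝ^k`. -/
def eucNorm {k : ℕ} (v : Fin k → ℝ) : ℝ := Real.sqrt (∑ i, v i ^ 2)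

/-- Membership in `K_ε` (max-norm version): every nonzero lattice vector has
max norm at least `ε`. -/
def inKmax {k : ℕ} (ε : ℝ) (Λ : Set (Fin k → ℝ)) : Prop :=
  ∀ v ∈ Λ, v ≠ 0 → ε ≤ ‖v‖

/-- Membership in `K_ε` (Euclidean version). -/
def inKeuc {k : ℕ} (ε : ℝ) (Λ : Set (Fin k → ℝ)) : Prop :=
  ∀ v ∈ Λ, v ≠ 0 → ε ≤ eucNorm v

/-- `g_𝒯 (gℤ^k)` has linear growth (max-norm version of `K_ε`). -/
def HasLinearGrowthMax (m n : ℕ) (𝒯 : Set (Fin (m + n) → ℝ))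
    (g : Matrix (Fin (m + n)) (Fin (m + n)) ℝ) : Prop :=
  ∃ γ : ℝ, 0 < γ ∧ ¬ Bornology.IsBounded
    {t ∈ 𝒯 | ¬ inKmax (Real.exp (-(γ * height m n t))) (latticeOf (gMat m n t * g))}

/-- `g_𝒯 (gℤ^k)` has linear growth (Euclidean version of `K_ε`). -/
def HasLinearGrowthEuc (m n : ℕ) (𝒯 : Set (Fin (m + n) → ℝ))
    (g : Matrix (Fin (m + n)) (Fin (m + n)) ℝ) : Prop :=
  ∃ γ : ℝ, 0 < γ ∧ ¬ Bornology.IsBounded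
    {t ∈ 𝒯 | ¬ inKeuc (Real.exp (-(γ * height m n t))) (latticeOf (gMat m n t * g))}

/-- The central ray `ℛ = {(t/m,…,t/m, t/n,…,t/n) : t > 0}`. -/
def centralRay (m n : ℕ) : Set (Fin (m + n) → ℝ) :=
  {t | ∃ s : ℝ, 0 < s ∧ t = fun i : Fin (m + n) => if (i : ℕ) < m then s / m else s / n}

/-- The coordinate of the wedge `v₁ ∧ ⋯ ∧ v_ℓ` at the basis element `e_S` of
`⋀^ℓ(ℝ^k)` (`S ⊆ {1,…,k}` with `|S| = ℓ`, written in increasing order); `0` if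
`|S| ≠ ℓ`. -/
def wedgeCoord {k ℓ : ℕ} (v : Fin ℓ → (Fin k → ℝ)) (S : Finset (Fin k)) : ℝ :=
  if h : S.card = ℓ then
    Matrix.det (Matrix.of fun a b : Fin ℓ => v b ((S.orderIsoOfFin h a : Fin k)))
  else 0

/-- The Euclidean norm of the wedge `v₁ ∧ ⋯ ∧ v_ℓ` in `⋀^ℓ(ℝ^k)`. -/
def wedgeNorm {k ℓ : ℕ} (v : Fin ℓ → (Fin k → ℝ)) : ℝ :=
  Real.sqrt (∑ S : Finset (Fin k), wedgeCoord v S ^ 2)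

/-- `v₁, …, v_ℓ ∈ ℤ^k` form a primitive tuple: they can be completed to a basis
of `ℤ^k`.  These represent the elements of `𝒲_ℓ`. -/
def IsPrimitive {k ℓ : ℕ} (v : Fin ℓ → (Fin k → ℤ)) : Prop :=
  ∃ (b : Module.Basis (Fin k) ℤ (Fin k → ℤ)) (e : Fin ℓ ↪ Fin k), ∀ i, b (e i) = v i

/-- The action of a matrix `g` on (the tuple representing) a wedge of integer vectors. -/
def actTuple {k ℓ : ℕ} (g : Matrix (Fin k) (Fin k) ℝ) (v : Fin ℓ → (Fin k → ℤ)) :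
    Fin ℓ → (Fin k → ℝ) :=
  fun i => g.mulVec (intCast (v i))

/-- Membership of `gℤ^k` in `K̃_ε`: `‖g w‖ ≥ ε` for all `w ∈ 𝒲`. -/
def inKwedge {k : ℕ} (ε : ℝ) (g : Matrix (Fin k) (Fin k) ℝ) : Prop :=
  ∀ ℓ : ℕ, 1 ≤ ℓ → ℓ ≤ k → ∀ v : Fin ℓ → (Fin k → ℤ), IsPrimitive v →
    ε ≤ wedgeNorm (actTuple g v)

open Classical in
/-- The Euclidean norm of the orthogonal projection `π⁺_t` of a wedge onto `E⁺_t`,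
the span of the basis elements `e_I ∧ v_J` (i.e. `e_S`) with
`∑_{i∈I} tᵢ ≥ ∑_{j∈J} t_{m+j}`. -/
def projPlusNorm (m n : ℕ) {ℓ : ℕ} (t : Fin (m + n) → ℝ) (v : Fin ℓ → (Fin (m + n) → ℝ)) : ℝ :=
  Real.sqrt (∑ S : Finset (Fin (m + n)),
    if (∑ j ∈ S.filter (fun j : Fin (m + n) => ¬ ((j : ℕ) < m)), t j) ≤
        (∑ i ∈ S.filter (fun i : Fin (m + n) => (i : ℕ) < m), t i)
    then wedgeCoord v S ^ 2 else 0)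

/-- `ν` is absolutely decaying. -/
def AbsolutelyDecaying {d : ℕ} (ν : Measure (Fin d → ℝ)) : Prop :=
  ∀ᵐ x ∂ν, ∃ V, IsOpen V ∧ x ∈ V ∧ ∃ C : ℝ, 0 < C ∧ ∃ α : ℝ, 0 < α ∧
    ∀ y ∈ msupport ν, ∀ r : ℝ, 0 < r → ball y r ⊆ V →
      ∀ (u : Fin d → ℝ) (c : ℝ), (∑ i, u i ^ 2) = 1 → ∀ ε : ℝ, 0 < ε →
        ν {z ∈ ball y r | |(∑ i, u i * z i) - c| < ε} ≤
          ENNReal.ofReal (C * (ε / r) ^ α) * ν (ball y r)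

/-- `ν` is absolutely friendly: Federer and absolutely decaying. -/
def AbsolutelyFriendly {d : ℕ} (ν : Measure (Fin d → ℝ)) : Prop :=
  IsFederer ν ∧ AbsolutelyDecaying ν

/-- `(F, ν)` is row-nonplanar: for every ball `B ⊆ U` of positive measure and every
nonzero `v ∈ ℝ^n`, the map `x ↦ F(x)v` is nonconstant on `B ∩ supp ν`. -/
def RowNonplanar {X : Type*} [PseudoMetricSpace X] [MeasurableSpace X] {m n : ℕ}
    (F : X → Matrix (Fin m) (Fin n) ℝ) (ν : Measure X) (U : Set X) : Prop :=
  ∀ (x : X) (r : ℝ), 0 < r → ball x r ⊆ U → 0 < ν (ball x r) →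
    ∀ v : Fin n → ℝ, v ≠ 0 →
      ∃ y ∈ ball x r ∩ msupport ν, ∃ z ∈ ball x r ∩ msupport ν,
        (F y).mulVec v ≠ (F z).mulVec v

open Filter Topology Real
open scoped Matrix

section IntegerVectors

variable {ι : Type*}

@[simp]
lemma intCast_zero : intCast (0 : ι → ℤ) = 0 := by
  ext i
  simp [intCast]

lemma intCast_neg (q : ι → ℤ) : intCast (-q) = -intCast q := by
  ext i
  simp [intCast]

lemma intCast_smul (c : ℤ) (q : ι → ℤ) : intCast (c • q) = (c : ℝ) • intCast q := by
  ext i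
  simp [intCast]

lemma intCast_append {m n : ℕ} (p : Fin m → ℤ) (q : Fin n → ℤ) :
    intCast (Fin.append p q) = Fin.append (intCast p) (intCast q) := by
  ext i
  refine Fin.addCases (fun i => ?_) (fun j => ?_) i <;> simp [intCast]

variable [Fintype ι]

lemma isometry_intCast : Isometry (intCast : (ι → ℤ) → ι → ℝ) :=
  Isometry.piMap (f := fun _ => ((↑) : ℤ → ℝ)) fun _ => Real.isometry_intCast

lemma norm_intCast (q : ι → ℤ) : ‖intCast q‖ = ‖q‖ :=
  isometry_intCast.norm_map_of_map_zero (funext fun _ => Int.cast_zero) q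

lemma one_le_norm_intCast {q : ι → ℤ} (hq : q ≠ 0) : 1 ≤ ‖intCast q‖ := by
  obtain ⟨i, hi⟩ := Function.ne_iff.1 hq
  rw [norm_intCast]
  calc (1 : ℝ) ≤ ‖q i‖ := by
        simpa [Int.norm_eq_abs] using (Int.cast_le (R := ℝ)).2 (Int.one_le_abs hi)
    _ ≤ ‖q‖ := norm_le_pi_norm q i

lemma finite_setOf_norm_intCast_le (C : ℝ) : {q : ι → ℤ | ‖intCast q‖ ≤ C}.Finite := by
  convert (isCompact_closedBall (0 : ι → ℤ) C).finite_of_discrete using 1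
  ext q
  simp [norm_intCast]

lemma exists_pos_le_norm_sub_intCast {x : ι → ℝ} (hx : x ∉ range intCast) :
    ∃ c > 0, ∀ p : ι → ℤ, c ≤ ‖x - intCast p‖ := by
  obtain ⟨c, hc, hball⟩ :=
    Metric.isOpen_iff.1 isometry_intCast.isClosedEmbedding.isClosed_range.isOpen_compl x hx
  refine ⟨c, hc, fun p => ?_⟩
  rw [← dist_eq_norm, dist_comm]
  exact not_lt.1 fun h => hball h ⟨p, rfl⟩

end IntegerVectors

lemma append_eq_zero_iff {α : Type*} [Zero α] {m n : ℕ} {x : Fin m → α} {y : Fin n → α} :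
    Fin.append x y = 0 ↔ x = 0 ∧ y = 0 := by
  simp [funext_iff, Fin.forall_fin_add]

lemma norm_append_lt_iff {E : Type*} [SeminormedAddGroup E] {m n : ℕ} {x : Fin m → E}
    {y : Fin n → E} {ε : ℝ} (hε : 0 < ε) : ‖Fin.append x y‖ < ε ↔ ‖x‖ < ε ∧ ‖y‖ < ε := by
  simp [pi_norm_lt_iff hε, Fin.forall_fin_add]

lemma isBounded_image_smul_iff {E : Type*} [NormedAddCommGroup E] [NormedSpace ℝ E] {c : E}
    (hc : c ≠ 0) {S : Set ℝ} : Bornology.IsBounded ((· • c) '' S) ↔ Bornology.IsBounded S := by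
  have hc' : 0 < ‖c‖ := norm_pos_iff.2 hc
  simp only [isBounded_iff_forall_norm_le, forall_mem_image, norm_smul]
  constructor
  · rintro ⟨C, hC⟩
    exact ⟨C / ‖c‖, fun s hs => (le_div_iff₀ hc').2 (hC hs)⟩
  · rintro ⟨C, hC⟩
    exact ⟨C * ‖c‖, fun s hs => mul_le_mul_of_nonneg_right (hC s hs) hc'.le⟩

lemma exp_mul_lt_exp_iff {a b x : ℝ} : exp a * x < exp b ↔ x < exp (b - a) := by
  rw [exp_sub, lt_div_iff₀ (exp_pos a), mul_comm]

lemma exp_neg_mul_le_rpow_neg_div {α β s y : ℝ} (hα : 0 ≤ α) (hβ : 0 < β) (hy : 0 < y)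
    (hys : y < exp (β * s)) : exp (-(α * s)) ≤ y ^ (-(α / β)) := by
  rw [rpow_def_of_pos hy, exp_le_exp]
  have hlog : log y < β * s := (log_lt_iff_lt_exp hy).2 hys
  have hmul := mul_le_mul_of_nonneg_left hlog.le (div_nonneg hα hβ.le)
  have hαs : α / β * (β * s) = α * s := by field_simp
  nlinarith

lemma exists_pos_lt_mul_sub {m n δ : ℝ} (hn : 0 < n) (hδ : 0 < δ) :
    ∃ γ : ℝ, 0 < γ ∧ 1 / m + γ < (n / m + δ) * (1 / n - γ) := by
  have h0 : 1 / m + 0 < (n / m + δ) * (1 / n - 0) := by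
    have hnm : n / m * (1 / n) = 1 / m := by field_simp
    rw [sub_zero, add_zero, add_mul, hnm, lt_add_iff_pos_right]
    positivity
  have hev : ∀ᶠ γ in 𝓝 (0 : ℝ), 1 / m + γ < (n / m + δ) * (1 / n - γ) :=
    ContinuousAt.eventually_lt (by fun_prop) (by fun_prop) h0
  obtain ⟨γ, hγ, hγpos⟩ :=
    ((hev.filter_mono nhdsWithin_le_nhds).and self_mem_nhdsWithin).exists (f := 𝓝[>] 0)
  exact ⟨γ, hγpos, hγ⟩

variable {m n : ℕ}

def rayPoint (m n : ℕ) (s : ℝ) : Fin (m + n) → ℝ :=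
  fun i => if (i : ℕ) < m then s / m else s / n

lemma rayPoint_eq_smul (s : ℝ) : rayPoint m n s = s • rayPoint m n 1 := by
  ext i
  simp only [rayPoint, Pi.smul_apply, smul_eq_mul]
  split_ifs <;> ring

lemma rayPoint_one_ne_zero (hm : 0 < m) : rayPoint m n 1 ≠ 0 := by
  intro h
  have := congrFun h ⟨0, by omega⟩
  simp [rayPoint, hm, hm.ne'] at this

lemma height_rayPoint (hm : 0 < m) (s : ℝ) : height m n (rayPoint m n s) = s := by
  simp [height, rayPoint]
  field_simp

lemma uMat_mulVec_append (Y : Matrix (Fin m) (Fin n) ℝ) (x : Fin m → ℝ) (y : Fin n → ℝ) :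
    uMat Y *ᵥ Fin.append x y = Fin.append (x + Y *ᵥ y) y := by
  ext i
  rw [uMat, Matrix.reindex_apply, Matrix.submatrix_mulVec_equiv]
  refine Fin.addCases (fun i => ?_) (fun j => ?_) i <;>
    simp [Matrix.fromBlocks_mulVec, Function.comp_def]

lemma gMat_rayPoint_mulVec_append (s : ℝ) (x : Fin m → ℝ) (y : Fin n → ℝ) :
    gMat m n (rayPoint m n s) *ᵥ Fin.append x y =
      Fin.append (exp (s / m) • x) (exp (-(s / n)) • y) := by
  ext i
  rw [gMat, Matrix.mulVec_diagonal]
  refine Fin.addCases (fun i => ?_) (fun j => ?_) i <;> simp [rayPoint]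

lemma mulVec_intCast_append (Y : Matrix (Fin m) (Fin n) ℝ) (s : ℝ) (p : Fin m → ℤ)
    (q : Fin n → ℤ) :
    (gMat m n (rayPoint m n s) * uMat Y) *ᵥ intCast (Fin.append (-p) q) =
      Fin.append (exp (s / m) • (Y *ᵥ intCast q - intCast p)) (exp (-(s / n)) • intCast q) := by
  rw [← Matrix.mulVec_mulVec, intCast_append, uMat_mulVec_append, gMat_rayPoint_mulVec_append,
    intCast_neg, neg_add_eq_sub]

lemma not_inKmax_rayPoint_iff (Y : Matrix (Fin m) (Fin n) ℝ) {s ε : ℝ} (hs : 0 ≤ s)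
    (hε : 0 < ε) (hε1 : ε ≤ 1) :
    ¬ inKmax ε (latticeOf (gMat m n (rayPoint m n s) * uMat Y)) ↔
      ∃ q : Fin n → ℤ, q ≠ 0 ∧ ∃ p : Fin m → ℤ,
        exp (s / m) * ‖Y *ᵥ intCast q - intCast p‖ < ε ∧ exp (-(s / n)) * ‖intCast q‖ < ε := by
  have hsplit : ∀ z : Fin (m + n) → ℤ, ∃ p q, z = Fin.append (-p) q := fun z =>
    ⟨-fun i => z (Fin.castAdd n i), fun j => z (Fin.natAdd m j), by
      simp [Fin.append_castAdd_natAdd]⟩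
  simp only [inKmax, latticeOf, not_forall, not_le, exists_prop, Set.mem_ofPred_eq]
  constructor
  · rintro ⟨_, ⟨z, rfl⟩, hv0, hvε⟩
    obtain ⟨p, q, rfl⟩ := hsplit z
    rw [mulVec_intCast_append, norm_append_lt_iff hε, norm_smul, norm_smul, Real.norm_eq_abs,
      Real.norm_eq_abs, abs_exp, abs_exp] at hvε
    refine ⟨q, ?_, p, hvε⟩
    rintro rfl
    -- with `q = 0` the vector is `exp (s / m) • (-p)`, too long unless `p = 0`
    obtain rfl : p = 0 := by
      by_contra hp
      have h1 : 1 ≤ exp (s / m) := one_le_exp (by positivity)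
      have h2 := one_le_norm_intCast hp
      simp only [intCast_zero, Matrix.mulVec_zero, zero_sub, norm_neg] at hvε
      nlinarith [hvε.1]
    rw [mulVec_intCast_append, Ne, append_eq_zero_iff] at hv0
    simp at hv0
  · rintro ⟨q, hq, p, h1, h2⟩
    refine ⟨_, ⟨Fin.append (-p) q, rfl⟩, ?_, ?_⟩
    · rw [mulVec_intCast_append, Ne, append_eq_zero_iff, smul_eq_zero, smul_eq_zero]
      have hq' : intCast q ≠ 0 := norm_pos_iff.1 (zero_lt_one.trans_le (one_le_norm_intCast hq))
      simp [hq', exp_ne_zero]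
    · rw [mulVec_intCast_append, norm_append_lt_iff hε, norm_smul, norm_smul, Real.norm_eq_abs,
        Real.norm_eq_abs, abs_exp, abs_exp]
      exact ⟨h1, h2⟩

def approxTimes (Y : Matrix (Fin m) (Fin n) ℝ) (α β : ℝ) : Set ℝ :=
  {s | 0 < s ∧ ∃ q : Fin n → ℤ, q ≠ 0 ∧ ∃ p : Fin m → ℤ,
    ‖Y *ᵥ intCast q - intCast p‖ < exp (-(α * s)) ∧ ‖intCast q‖ < exp (β * s)}

def approxVectors (Y : Matrix (Fin m) (Fin n) ℝ) (κ : ℝ) : Set (Fin n → ℤ) :=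
  {q | ∃ p : Fin m → ℤ, ‖Y *ᵥ intCast q - intCast p‖ < ‖intCast q‖ ^ (-κ)}

lemma isVWA_iff_infinite_approxVectors (Y : Matrix (Fin m) (Fin n) ℝ) :
    IsVWA Y ↔ ∃ δ : ℝ, 0 < δ ∧ (approxVectors Y (n / m + δ)).Infinite := by
  simp only [IsVWA, approxVectors, neg_add']

lemma not_inKmax_rayPoint_iff_mem_approxTimes (Y : Matrix (Fin m) (Fin n) ℝ) {γ s : ℝ}
    (hγ : 0 < γ) (hs : 0 < s) :
    ¬ inKmax (exp (-(γ * s))) (latticeOf (gMat m n (rayPoint m n s) * uMat Y)) ↔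
      s ∈ approxTimes Y (1 / m + γ) (1 / n - γ) := by
  rw [not_inKmax_rayPoint_iff Y hs.le (exp_pos _) (exp_le_one_iff.2 (by nlinarith))]
  simp only [approxTimes, exp_mul_lt_exp_iff, Set.mem_ofPred_eq, hs, true_and]
  ring_nf

lemma hasLinearGrowthMax_centralRay_iff (hm : 0 < m) (Y : Matrix (Fin m) (Fin n) ℝ) :
    HasLinearGrowthMax m n (centralRay m n) (uMat Y) ↔
      ∃ γ : ℝ, 0 < γ ∧ ¬ BddAbove (approxTimes Y (1 / m + γ) (1 / n - γ)) := by
  refine exists_congr fun γ => and_congr_right fun hγ => not_congr ?_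
  have hset : {t ∈ centralRay m n | ¬ inKmax (exp (-(γ * height m n t)))
      (latticeOf (gMat m n t * uMat Y))} =
        rayPoint m n '' approxTimes Y (1 / m + γ) (1 / n - γ) := by
    ext t
    constructor
    · rintro ⟨⟨s, hs, rfl⟩, h⟩
      change ¬ inKmax (exp (-(γ * height m n (rayPoint m n s))))
        (latticeOf (gMat m n (rayPoint m n s) * uMat Y)) at h
      rw [height_rayPoint hm, not_inKmax_rayPoint_iff_mem_approxTimes Y hγ hs] at h
      exact ⟨s, h, rfl⟩
    · rintro ⟨s, hs, rfl⟩
      refine ⟨⟨s, hs.1, rfl⟩, ?_⟩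
      rwa [height_rayPoint hm, not_inKmax_rayPoint_iff_mem_approxTimes Y hγ hs.1]
  have hray : rayPoint m n = (· • rayPoint m n 1) := funext rayPoint_eq_smul
  rw [hset, hray, isBounded_image_smul_iff (rayPoint_one_ne_zero hm),
    isBounded_iff_bddBelow_bddAbove]
  exact and_iff_right ⟨0, fun s hs => hs.1.le⟩

lemma pos_of_mem_approxTimes {Y : Matrix (Fin m) (Fin n) ℝ} {α β s : ℝ}
    (hs : s ∈ approxTimes Y α β) : 0 < β := by
  obtain ⟨hs, q, hq, -, -, hqs⟩ := hs
  have hβs : 0 < β * s := one_lt_exp_iff.1 ((one_le_norm_intCast hq).trans_lt hqs)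
  exact (pos_iff_pos_of_mul_pos hβs).2 hs

lemma not_bddAbove_approxTimes_of_infinite {Y : Matrix (Fin m) (Fin n) ℝ} {α β κ : ℝ}
    (hα : 0 < α) (hκ : 0 < κ) (hακβ : α < κ * β) (hQ : (approxVectors Y κ).Infinite) :
    ¬ BddAbove (approxTimes Y α β) := by
  rw [not_bddAbove_iff]
  intro R
  obtain ⟨q, ⟨p, hp⟩, hqR⟩ :
      ∃ q ∈ approxVectors Y κ, exp (max 0 (α * R / κ)) < ‖intCast q‖ := by
    by_contra! hle
    exact hQ ((finite_setOf_norm_intCast_le _).subset hle)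
  have hqpos : 0 < ‖intCast q‖ := (exp_pos _).trans hqR
  -- writing `‖q‖ = exp L`, the approximation `q` shows up at time `s = κ L / α`
  obtain ⟨L, hqL⟩ : ∃ L, exp L = ‖intCast q‖ := ⟨_, exp_log hqpos⟩
  rw [← hqL, exp_lt_exp] at hqR
  have hL0 : 0 < L := (le_max_left _ _).trans_lt hqR
  have hLR : α * R / κ < L := (le_max_right _ _).trans_lt hqR
  refine ⟨κ * L / α, ⟨by positivity, q, ?_, p, ?_, ?_⟩, ?_⟩
  · rintro rfl
    simp at hqpos
  · calc ‖Y *ᵥ intCast q - intCast p‖ < ‖intCast q‖ ^ (-κ) := hp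
      _ = exp (-(α * (κ * L / α))) := by
        rw [← hqL, ← exp_mul]
        congr 1
        field_simp
  · rw [← hqL, exp_lt_exp]
    calc L < κ * β / α * L := lt_mul_of_one_lt_left hL0 ((one_lt_div hα).2 hακβ)
      _ = β * (κ * L / α) := by ring
  · rw [lt_div_iff₀ hα]
    linarith [(div_lt_iff₀ hκ).1 hLR]

lemma mem_approxVectors_of_approx {Y : Matrix (Fin m) (Fin n) ℝ} {α β s : ℝ} (hα : 0 ≤ α)
    (hβ : 0 < β) {q : Fin n → ℤ} (hq : q ≠ 0) {p : Fin m → ℤ}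
    (h₁ : ‖Y *ᵥ intCast q - intCast p‖ < exp (-(α * s))) (h₂ : ‖intCast q‖ < exp (β * s)) :
    q ∈ approxVectors Y (α / β) :=
  ⟨p, h₁.trans_le (exp_neg_mul_le_rpow_neg_div hα hβ
    (zero_lt_one.trans_le (one_le_norm_intCast hq)) h₂)⟩

lemma approxVectors_infinite_of_mulVec_eq {Y : Matrix (Fin m) (Fin n) ℝ} {q : Fin n → ℤ}
    {p : Fin m → ℤ} (hq : q ≠ 0) (hqp : Y *ᵥ intCast q = intCast p) (κ : ℝ) :
    (approxVectors Y κ).Infinite := by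
  have hinj : Function.Injective fun k : ℕ => ((k : ℤ) + 1) • q :=
    (smul_left_injective ℤ hq).comp fun k l h => by simpa using h
  refine Set.infinite_of_injective_forall_mem hinj fun k => ⟨((k : ℤ) + 1) • p, ?_⟩
  have hkq : ((k : ℤ) + 1) • q ≠ 0 := smul_ne_zero (by omega) hq
  have hpos : 0 < ‖intCast (((k : ℤ) + 1) • q)‖ ^ (-κ) :=
    rpow_pos_of_pos (zero_lt_one.trans_le (one_le_norm_intCast hkq)) _
  refine lt_of_eq_of_lt ?_ hpos
  rw [intCast_smul, intCast_smul, Matrix.mulVec_smul, hqp, sub_self, norm_zero]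

lemma approxVectors_infinite_of_not_bddAbove {Y : Matrix (Fin m) (Fin n) ℝ} {α β : ℝ}
    (hα : 0 < α) (hβ : 0 < β) (h : ¬ BddAbove (approxTimes Y α β)) :
    (approxVectors Y (α / β)).Infinite := by
  by_cases hexact : ∃ q : Fin n → ℤ, q ≠ 0 ∧ Y *ᵥ intCast q ∈ range intCast
  · obtain ⟨q, hq, p, hp⟩ := hexact
    exact approxVectors_infinite_of_mulVec_eq hq hp.symm _
  push Not at hexact
  intro hfin
  have hfreq : ∃ᶠ s in atTop, s ∈ approxTimes Y α β := by
    rw [frequently_atTop]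
    intro a
    obtain ⟨s, hs, has⟩ := not_bddAbove_iff.1 h a
    exact ⟨s, has.le, hs⟩
  have hdecay : Tendsto (fun s => exp (-(α * s))) atTop (𝓝 0) :=
    tendsto_exp_neg_atTop_nhds_zero.comp (tendsto_id.const_mul_atTop hα)
  have hev : ∀ᶠ s in atTop, ∀ q ∈ approxVectors Y (α / β), q ≠ 0 →
      ∀ p : Fin m → ℤ, exp (-(α * s)) < ‖Y *ᵥ intCast q - intCast p‖ := by
    refine hfin.eventually_all.2 fun q _ => ?_
    by_cases hq : q = 0
    · exact Eventually.of_forall fun _ hq' => absurd hq hq'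
    obtain ⟨c, hc, hcq⟩ := exists_pos_le_norm_sub_intCast (hexact q hq)
    filter_upwards [hdecay.eventually (gt_mem_nhds hc)] with s hs _ p
    exact hs.trans_le (hcq p)
  obtain ⟨s, ⟨-, q, hq, p, h₁, h₂⟩, hall⟩ := (hfreq.and_eventually hev).exists
  exact (hall q (mem_approxVectors_of_approx hα.le hβ hq h₁ h₂) hq p).not_gt h₁

/-- `Y` is VWA iff `g_ℛ Λ_Y` has linear growth. -/
theorem statement3 (m n : ℕ) (hm : 0 < m) (hn : 0 < n)
    (Y : Matrix (Fin m) (Fin n) ℝ) :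
    IsVWA Y ↔ HasLinearGrowthMax m n (centralRay m n) (uMat Y) := by
  rw [isVWA_iff_infinite_approxVectors, hasLinearGrowthMax_centralRay_iff hm]
  have hm' : (0 : ℝ) < m := by exact_mod_cast hm
  have hn' : (0 : ℝ) < n := by exact_mod_cast hn
  constructor
  · rintro ⟨δ, hδ, hQ⟩
    obtain ⟨γ, hγ, hexp⟩ := exists_pos_lt_mul_sub hn' hδ
    exact ⟨γ, hγ, not_bddAbove_approxTimes_of_infinite (by positivity) (by positivity) hexp hQ⟩
  · rintro ⟨γ, hγ, hunb⟩
    obtain ⟨s, hs, -⟩ := not_bddAbove_iff.1 hunb 0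
    have hβ : 0 < 1 / n - γ := pos_of_mem_approxTimes hs
    refine ⟨(1 / m + γ) / (1 / n - γ) - n / m, ?_, ?_⟩
    · rw [sub_pos, lt_div_iff₀ hβ]
      have hnm : (n : ℝ) / m * (1 / n) = 1 / m := by field_simp
      nlinarith [div_pos hn' hm']
    · rw [add_sub_cancel]
      exact approxVectors_infinite_of_not_bddAbove (by positivity) hβ hunb

end Paper
end
end

section
/- Suppose z_1, …, z_m ≥ 0, r ≥ 0 and C > 1 are such that z_i < r for each i = 1, …, m and ∏_{i=1}^m z_i < r^m / C. Then there exist C_1, …, C_m ≥ 1 such that C = ∏_{i=1}^m C_i and C_i z_i ≤ r for each i = 1, …, m. -/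
open MeasureTheory Metric Set

noncomputable section

namespace Paper

/-! If some `zᵢ ≤ 0`, the whole factor `C` can be put on that coordinate. Otherwise the
ratios `bᵢ = r / zᵢ` are at least `1` with `∏ bᵢ > C`, and `Cᵢ = bᵢ ^ t` works for the
`t ∈ [0, 1]` with `(∏ bᵢ) ^ t = C`, which exists by the intermediate value theorem. -/

theorem exists_mem_Icc_rpow_eq {P C : ℝ} (hC : 1 ≤ C) (hCP : C ≤ P) :
    ∃ t ∈ Icc (0 : ℝ) 1, P ^ t = C := by
  have hP : P ≠ 0 := by linarith
  have hcont : ContinuousOn (fun t : ℝ => P ^ t) (Icc 0 1) :=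
    (Real.continuous_const_rpow hP).continuousOn
  have hC' : C ∈ Icc (P ^ (0 : ℝ)) (P ^ (1 : ℝ)) := by
    rw [Real.rpow_zero, Real.rpow_one]
    exact ⟨hC, hCP⟩
  exact intermediate_value_Icc zero_le_one hcont hC'

theorem exists_prod_eq_of_le_prod {ι : Type*} [Fintype ι] {b : ι → ℝ} {C : ℝ}
    (hb : ∀ i, 1 ≤ b i) (hC : 1 ≤ C) (hCb : C ≤ ∏ i, b i) :
    ∃ c : ι → ℝ, (∀ i, 1 ≤ c i ∧ c i ≤ b i) ∧ ∏ i, c i = C := by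
  obtain ⟨t, ⟨ht0, ht1⟩, hPt⟩ := exists_mem_Icc_rpow_eq hC hCb
  refine ⟨fun i => b i ^ t, fun i => ⟨Real.one_le_rpow (hb i) ht0, ?_⟩, ?_⟩
  · simpa using Real.rpow_le_rpow_of_exponent_le (hb i) ht1
  · rw [Real.finsetProd_rpow _ _ (fun i _ => zero_le_one.trans (hb i)), hPt]

theorem exists_prod_eq_of_nonpos {ι : Type*} [Fintype ι] [DecidableEq ι] {z : ι → ℝ}
    {r C : ℝ} (hC : 1 ≤ C) (hz : ∀ i, z i < r) {i₀ : ι} (hi₀ : z i₀ ≤ 0) :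
    ∃ c : ι → ℝ, (∀ i, 1 ≤ c i) ∧ C = ∏ i, c i ∧ ∀ i, c i * z i ≤ r := by
  refine ⟨Pi.mulSingle i₀ C, fun i => ?_, ?_, fun i => ?_⟩
  · rw [Pi.mulSingle_apply]
    split_ifs <;> linarith
  · simp
  · rw [Pi.mulSingle_apply]
    split_ifs with hi
    · subst hi
      nlinarith [hz i]
    · linarith [hz i]

theorem statement6_general (m : ℕ) (z : Fin m → ℝ) (r C : ℝ) (hC : 1 < C)
    (h1 : ∀ i, z i < r) (h2 : ∏ i, z i < r ^ m / C) :
    ∃ Cs : Fin m → ℝ, (∀ i, 1 ≤ Cs i) ∧ C = ∏ i, Cs i ∧ ∀ i, Cs i * z i ≤ r := by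
  by_cases hpos : ∀ i, 0 < z i
  · have hb : ∀ i, 1 ≤ r / z i := fun i => (one_le_div (hpos i)).2 (h1 i).le
    have hCb : C ≤ ∏ i, r / z i := by
      rw [Finset.prod_div_distrib, Finset.prod_const, Finset.card_univ, Fintype.card_fin,
        le_div_iff₀ (Finset.prod_pos fun i _ => hpos i)]
      have := (lt_div_iff₀ (zero_lt_one.trans hC)).1 h2
      linarith
    obtain ⟨c, hc, hprod⟩ := exists_prod_eq_of_le_prod hb hC.le hCb
    refine ⟨c, fun i => (hc i).1, hprod.symm, fun i => ?_⟩
    calc c i * z i ≤ r / z i * z i := mul_le_mul_of_nonneg_right (hc i).2 (hpos i).le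
      _ = r := div_mul_cancel₀ r (hpos i).ne'
  · obtain ⟨i₀, hi₀⟩ := not_forall.1 hpos
    exact exists_prod_eq_of_nonpos hC.le h1 (not_lt.1 hi₀)

/-- the elementary real-number lemma. -/
theorem statement6 (m : ℕ) (z : Fin m → ℝ) (r C : ℝ)
    (hz : ∀ i, 0 ≤ z i) (hr : 0 ≤ r) (hC : 1 < C)
    (h1 : ∀ i, z i < r) (h2 : ∏ i, z i < r ^ m / C) :
    ∃ Cs : Fin m → ℝ, (∀ i, 1 ≤ Cs i) ∧ C = ∏ i, Cs i ∧ ∀ i, Cs i * z i ≤ r :=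
  statement6_general m z r C hC h1 h2

end Paper
end
end
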